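/- arXiv:2011.13460 — 5 statements merged into one kernel-verified Lean document; each statement's English description precedes it below -/
import Mathlib

section
/- Let j : Y → X be a continuous surjection of compact metric spaces. Then the following are equivalent: (i) there exists a unique minimal closed set K ⊆ Y such that j(K) = X (i.e., a unique closed set K with j(K) = X that is minimal with respect to inclusion among closed sets with full image); (ii) the set {x ∈ X : the fiber j⁻¹(x) is a singleton} is dense in X. -/
/-!
Both conditions say that there is a *least* closed set with full image. If the points with a
singleton fiber are dense, the closure of their preimage lies in every closed set with full
image and has full image itself. Conversely, by Zorn's lemma every closed set with full image
contains a minimal one, so a unique minimal `K` lies in every closed set with full image. Hence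
for `y ∈ K` and any neighbourhood `W` of `y`, the closed set `Wᶜ` misses a whole fiber:
fibers of arbitrarily small diameter occur over every open set, and by upper semicontinuity
of fibers and Baire's theorem the singleton fibers are dense.
-/

open Set Metric

section Minimal

variable {Y X : Type*} [TopologicalSpace Y] [CompactSpace Y] [TopologicalSpace X] [T1Space X]
  {j : Y → X}

theorem image_sInter_eq_univ_of_isChain (hj : Continuous j) {c : Set (Set Y)}
    (hc : ∀ F ∈ c, IsClosed F ∧ j '' F = univ) (hchain : IsChain (· ⊆ ·) c) (hne : c.Nonempty) :
    j '' ⋂₀ c = univ := by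
  refine eq_univ_of_forall fun x => ?_
  have : Nonempty c := hne.to_subtype
  have hfiber : (⋂ F : c, (F : Set Y) ∩ j ⁻¹' {x}).Nonempty := by
    refine IsCompact.nonempty_iInter_of_directed_nonempty_isCompact_isClosed _ ?_ ?_
      (fun F => ((hc F F.2).1.inter (isClosed_singleton.preimage hj)).isCompact)
      (fun F => (hc F F.2).1.inter (isClosed_singleton.preimage hj))
    · rintro ⟨F, hF⟩ ⟨G, hG⟩
      rcases hchain.total hF hG with h | h
      · exact ⟨⟨F, hF⟩, Subset.rfl, inter_subset_inter_left _ h⟩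
      · exact ⟨⟨G, hG⟩, inter_subset_inter_left _ h, Subset.rfl⟩
    · rintro ⟨F, hF⟩
      obtain ⟨y, hyF, hyx⟩ := (hc F hF).2.symm ▸ mem_univ x
      exact ⟨y, hyF, hyx⟩
  obtain ⟨y, hy⟩ := hfiber
  simp only [mem_iInter, mem_inter_iff, mem_preimage, mem_singleton_iff] at hy
  obtain ⟨F₀, hF₀⟩ := hne
  exact ⟨y, mem_sInter.2 fun F hF => (hy ⟨F, hF⟩).1, (hy ⟨F₀, hF₀⟩).2⟩

theorem exists_minimal_closed_subset_image_eq_univ (hj : Continuous j) {L : Set Y}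
    (hL : IsClosed L) (hLim : j '' L = univ) :
    ∃ K ⊆ L, IsClosed K ∧ j '' K = univ ∧ ∀ F ⊆ K, IsClosed F → j '' F = univ → F = K := by
  obtain ⟨K, hKL, hK⟩ := zorn_superset_nonempty {F : Set Y | IsClosed F ∧ j '' F = univ}
    (fun c hc hchain hne => ⟨⋂₀ c, ⟨isClosed_sInter fun F hF => (hc hF).1,
      image_sInter_eq_univ_of_isChain hj hc hchain hne⟩, fun _ => sInter_subset_of_mem⟩) L
    ⟨hL, hLim⟩
  exact ⟨K, hKL, hK.prop.1, hK.prop.2, fun F hFK hF hFim => hFK.antisymm (hK.2 ⟨hF, hFim⟩ hFK)⟩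

end Minimal

theorem exists_preimage_subset_of_forall_subset {Y X : Type*} [TopologicalSpace Y] {j : Y → X}
    {K : Set Y} (hK : ∀ F, IsClosed F → j '' F = univ → K ⊆ F) {W : Set Y} (hW : IsOpen W)
    (hKW : (K ∩ W).Nonempty) : ∃ x, j ⁻¹' {x} ⊆ W := by
  by_contra! h
  have hWc : j '' Wᶜ = univ := eq_univ_of_forall fun x => by
    obtain ⟨y, hyx, hyW⟩ := not_subset.1 (h x)
    exact ⟨y, hyW, hyx⟩
  obtain ⟨y, hyK, hyW⟩ := hKW
  exact hK Wᶜ hW.isClosed_compl hWc hyK hyW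

theorem preimage_setOf_existsUnique_subset {Y X : Type*} {j : Y → X} {F : Set Y}
    (hF : j '' F = univ) : j ⁻¹' {x | ∃! y, j y = x} ⊆ F := by
  rintro y ⟨_, -, huniq⟩
  obtain ⟨z, hzF, hzy⟩ := hF.symm ▸ mem_univ (j y)
  exact (huniq z hzy).trans (huniq y rfl).symm ▸ hzF

theorem isOpen_setOf_fiber_dist_lt {Y X : Type*} [PseudoMetricSpace Y] [CompactSpace Y]
    [TopologicalSpace X] [T2Space X] {j : Y → X} (hj : Continuous j) (ε : ℝ) :
    IsOpen {x : X | ∀ p q, j p = x → j q = x → dist p q < ε} := by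
  have hC : IsClosed {p : Y × Y | j p.1 = j p.2 ∧ ε ≤ dist p.1 p.2} :=
    (isClosed_eq (hj.comp continuous_fst) (hj.comp continuous_snd)).inter
      (isClosed_le continuous_const continuous_dist)
  have hcompl : {x : X | ∀ p q, j p = x → j q = x → dist p q < ε}ᶜ =
      (fun p : Y × Y => j p.1) '' {p | j p.1 = j p.2 ∧ ε ≤ dist p.1 p.2} := by
    ext x
    simp only [mem_compl_iff, mem_ofPred_eq, mem_image, Prod.exists, not_forall, not_lt]
    constructor
    · rintro ⟨p, q, rfl, hq, hpq⟩
      exact ⟨p, q, ⟨hq.symm, hpq⟩, rfl⟩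
    · rintro ⟨p, q, ⟨hpq, hd⟩, rfl⟩
      exact ⟨p, q, rfl, hpq.symm, hd⟩
  rw [← isClosed_compl_iff, hcompl]
  exact (hC.isCompact.image (hj.comp continuous_fst)).isClosed

theorem dense_setOf_fiber_dist_lt {Y X : Type*} [PseudoMetricSpace Y] [TopologicalSpace X]
    {j : Y → X} (hj : Continuous j) {K : Set Y} (hKim : j '' K = univ)
    (hK : ∀ F, IsClosed F → j '' F = univ → K ⊆ F) {ε : ℝ} (hε : 0 < ε) :
    Dense {x : X | ∀ p q, j p = x → j q = x → dist p q < ε} := by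
  refine dense_iff_inter_open.2 fun U hU ⟨x₀, hx₀⟩ => ?_
  obtain ⟨y, hyK, rfl⟩ := hKim.symm ▸ mem_univ x₀
  obtain ⟨x, hx⟩ := exists_preimage_subset_of_forall_subset hK
    (isOpen_ball.inter (hU.preimage hj)) ⟨y, hyK, mem_ball_self (half_pos hε), hx₀⟩
  obtain ⟨z, -, rfl⟩ := hKim.symm ▸ mem_univ x
  refine ⟨j z, (hx rfl).2, fun p q hp hq => ?_⟩
  have hpy : dist p y < ε / 2 := (hx hp).1
  have hqy : dist q y < ε / 2 := (hx hq).1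
  linarith [dist_triangle_right p q y]

theorem dense_setOf_existsUnique_of_forall_subset {Y X : Type*} [MetricSpace Y]
    [CompactSpace Y] [TopologicalSpace X] [T2Space X] [BaireSpace X] {j : Y → X}
    (hj : Continuous j) {K : Set Y} (hKim : j '' K = univ)
    (hK : ∀ F, IsClosed F → j '' F = univ → K ⊆ F) :
    Dense {x : X | ∃! y, j y = x} := by
  have hdense := dense_iInter_of_isOpen (fun n : ℕ => isOpen_setOf_fiber_dist_lt hj (1 / (n + 1)))
    fun n => dense_setOf_fiber_dist_lt hj hKim hK Nat.one_div_pos_of_nat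
  refine hdense.mono fun x hx => ?_
  obtain ⟨y, -, rfl⟩ := hKim.symm ▸ mem_univ x
  refine ⟨y, rfl, fun z hz => eq_of_forall_dist_le fun ε hε => ?_⟩
  obtain ⟨n, hn⟩ := exists_nat_one_div_lt hε
  exact (mem_iInter.1 hx n z y hz rfl).le.trans hn.le

theorem image_closure_preimage_setOf_existsUnique {Y X : Type*} [TopologicalSpace Y]
    [CompactSpace Y] [TopologicalSpace X] [T2Space X] {j : Y → X} (hj : Continuous j)
    (hdense : Dense {x : X | ∃! y, j y = x}) :
    j '' closure (j ⁻¹' {x | ∃! y, j y = x}) = univ := by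
  have hsub : {x : X | ∃! y, j y = x} ⊆ j '' closure (j ⁻¹' {x | ∃! y, j y = x}) := by
    intro x hx
    obtain ⟨y, rfl, -⟩ := id hx
    exact ⟨y, subset_closure hx, rfl⟩
  have hclosed : IsClosed (j '' closure (j ⁻¹' {x | ∃! y, j y = x})) :=
    (isClosed_closure.isCompact.image hj).isClosed
  exact eq_univ_of_univ_subset (hdense.closure_eq ▸ hclosed.closure_subset_iff.2 hsub)

theorem generalized_whyburn_general {Y X : Type*} [MetricSpace Y] [CompactSpace Y]
    [MetricSpace X] [CompactSpace X] (j : Y → X) (hj : Continuous j) :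
    (∃! K : Set Y, IsClosed K ∧ j '' K = Set.univ ∧
        ∀ F ⊆ K, IsClosed F → j '' F = Set.univ → F = K) ↔
      Dense {x : X | ∃! y : Y, j y = x} := by
  constructor
  · rintro ⟨K, ⟨-, hKim, -⟩, huniq⟩
    have hleast : ∀ F, IsClosed F → j '' F = univ → K ⊆ F := fun F hF hFim => by
      obtain ⟨M, hMF, hM⟩ := exists_minimal_closed_subset_image_eq_univ hj hF hFim
      exact huniq M hM ▸ hMF
    exact dense_setOf_existsUnique_of_forall_subset hj hKim hleast
  · intro hdense
    have hleast : ∀ F, IsClosed F → j '' F = univ → closure (j ⁻¹' {x | ∃! y, j y = x}) ⊆ F :=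
      fun F hF hFim => hF.closure_subset_iff.2 (preimage_setOf_existsUnique_subset hFim)
    have hfull := image_closure_preimage_setOf_existsUnique hj hdense
    refine ⟨_, ⟨isClosed_closure, hfull, fun F hFK hF hFim => hFK.antisymm (hleast F hF hFim)⟩,
      fun K ⟨hK, hKim, hKmin⟩ => (hKmin _ (hleast K hK hKim) isClosed_closure hfull).symm⟩

/-- Generalized Whyburn theorem: for a continuous surjection `j : Y → X` of compact
metric spaces, there exists a unique minimal closed set `K ⊆ Y` with `j(K) = X`
iff the set of points of `X` with singleton fiber is dense in `X`. -/
theorem generalized_whyburn {Y X : Type*} [MetricSpace Y] [CompactSpace Y]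
    [MetricSpace X] [CompactSpace X] (j : Y → X) (hj : Continuous j)
    (hjs : Function.Surjective j) :
    (∃! K : Set Y, IsClosed K ∧ j '' K = Set.univ ∧
        ∀ F ⊆ K, IsClosed F → j '' F = Set.univ → F = K) ↔
      Dense {x : X | ∃! y : Y, j y = x} :=
  generalized_whyburn_general j hj
end

section
/- Let j : Y → X be a continuous surjection of compact metric spaces. Then j is irreducible if and only if j is almost one-to-one. -/
/-!
Irreducibility says exactly that every nonempty open `U ⊆ Y` contains a whole fibre of `j`,
i.e. the set `kernImage j U ⊆ X` of points whose fibre lies in `U` is nonempty; it is open since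
`j` is a closed map. Hence for each `ε > 0` the points whose fibre fits in some `ε`-ball form a dense open set, and by Baire the points
whose fibre has diameter zero, i.e. is a singleton, are dense. Conversely, a point with singleton
fibre in the complement of a proper closed set `F` is mapped outside `j '' F`.
-/

open Set Metric Function

theorem image_ssubset_univ_of_dense_singleton_fibers {Y X : Type*} [TopologicalSpace Y]
    {j : Y → X} (hd : Dense {y : Y | j ⁻¹' {j y} = {y}}) {F : Set Y} (hF : IsClosed F)
    (hFp : F ⊂ univ) : j '' F ⊂ univ := by
  rw [ssubset_univ_iff] at hFp ⊢
  obtain ⟨y, hyF, hy⟩ := hd.inter_open_nonempty Fᶜ hF.isOpen_compl (nonempty_compl.2 hFp)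
  refine (ne_univ_iff_exists_notMem _).2 ⟨j y, ?_⟩
  rintro ⟨z, hzF, hz⟩
  have hzy : z ∈ j ⁻¹' {j y} := hz
  rw [hy, mem_singleton_iff] at hzy
  exact hyF (hzy ▸ hzF)

theorem nonempty_preimage_kernImage_of_irreducible {Y X : Type*} [TopologicalSpace Y]
    {j : Y → X} (hjs : Surjective j)
    (hirr : ∀ F : Set Y, IsClosed F → F ⊂ univ → j '' F ⊂ univ) {U : Set Y} (hU : IsOpen U)
    (hne : U.Nonempty) : (j ⁻¹' kernImage j U).Nonempty := by
  have himg := ssubset_univ_iff.1 <|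
    hirr Uᶜ hU.isClosed_compl (ssubset_univ_iff.2 (compl_ne_univ.2 hne))
  rw [hjs.nonempty_preimage, kernImage_eq_compl]
  exact nonempty_compl.2 himg

section SmallFiber

variable {Y X : Type*} {j : Y → X}

def smallFiberSet [PseudoMetricSpace Y] (j : Y → X) (ε : ℝ) : Set Y :=
  ⋃ z, j ⁻¹' kernImage j (ball z ε)

theorem isOpen_smallFiberSet [PseudoMetricSpace Y] [TopologicalSpace X] (hj : Continuous j)
    (hjc : IsClosedMap j) (ε : ℝ) : IsOpen (smallFiberSet j ε) :=
  isOpen_iUnion fun _ => (isClosedMap_iff_kernImage.1 hjc isOpen_ball).preimage hj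

theorem dense_smallFiberSet [PseudoMetricSpace Y] (hjs : Surjective j)
    (hirr : ∀ F : Set Y, IsClosed F → F ⊂ univ → j '' F ⊂ univ) {ε : ℝ} (hε : 0 < ε) :
    Dense (smallFiberSet j ε) := by
  refine dense_iff_inter_open.2 fun U hU ⟨y, hy⟩ => ?_
  obtain ⟨δ, hδ, hball⟩ := isOpen_iff.1 hU y hy
  have hr : 0 < min δ ε := lt_min hδ hε
  obtain ⟨w, hw⟩ := nonempty_preimage_kernImage_of_irreducible hjs hirr isOpen_ball
    (nonempty_ball.2 hr)
  have hwball : w ∈ ball y (min δ ε) := Set.preimage_kernImage.l_u_le _ hw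
  refine ⟨w, hball (ball_subset_ball (min_le_left δ ε) hwball), mem_iUnion.2 ⟨y, ?_⟩⟩
  exact kernImage_mono (ball_subset_ball (min_le_right δ ε)) hw

theorem iInter_smallFiberSet_subset [MetricSpace Y] :
    ⋂ n : ℕ, smallFiberSet j (1 / (n + 1)) ⊆ {y | j ⁻¹' {j y} = {y}} := by
  intro y hy
  refine eq_singleton_iff_unique_mem.2 ⟨rfl, fun w hw => eq_of_forall_dist_le fun ε hε => ?_⟩
  obtain ⟨n, hn⟩ := exists_nat_one_div_lt (half_pos hε)
  obtain ⟨z, hz⟩ := mem_iUnion.1 (mem_iInter.1 hy n)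
  have hwz : dist w z < 1 / (n + 1) := hz hw
  have hyz : dist y z < 1 / (n + 1) := hz rfl
  calc dist w y ≤ dist w z + dist y z := dist_triangle_right w y z
    _ ≤ ε := by linarith

end SmallFiber

theorem dense_singleton_fibers_of_irreducible {Y X : Type*} [MetricSpace Y] [BaireSpace Y]
    [TopologicalSpace X] {j : Y → X} (hj : Continuous j) (hjc : IsClosedMap j)
    (hjs : Surjective j) (hirr : ∀ F : Set Y, IsClosed F → F ⊂ univ → j '' F ⊂ univ) :
    Dense {y : Y | j ⁻¹' {j y} = {y}} :=
  (dense_iInter_of_isOpen_nat (fun _ => isOpen_smallFiberSet hj hjc _)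
    (fun _ => dense_smallFiberSet hjs hirr Nat.one_div_pos_of_nat)).mono
    iInter_smallFiberSet_subset

theorem whyburn_irreducible_iff_almost_one_to_one_general {Y X : Type*}
    [MetricSpace Y] [CompactSpace Y] [MetricSpace X]
    (j : Y → X) (hj : Continuous j) (hjs : Function.Surjective j) :
    (∀ F : Set Y, IsClosed F → F ⊂ Set.univ → j '' F ⊂ Set.univ) ↔
      Dense {y : Y | j ⁻¹' {j y} = {y}} :=
  ⟨dense_singleton_fibers_of_irreducible hj hj.isClosedMap hjs,
    fun hd _ hF hFp => image_ssubset_univ_of_dense_singleton_fibers hd hF hFp⟩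

/-- Whyburn's theorem: a continuous surjection of compact metric spaces is irreducible
(every proper closed subset has proper image) iff it is almost one-to-one
(the points whose fiber over their image is a singleton are dense). -/
theorem whyburn_irreducible_iff_almost_one_to_one {Y X : Type*}
    [MetricSpace Y] [CompactSpace Y] [MetricSpace X] [CompactSpace X]
    (j : Y → X) (hj : Continuous j) (hjs : Function.Surjective j) :
    (∀ F : Set Y, IsClosed F → F ⊂ Set.univ → j '' F ⊂ Set.univ) ↔
      Dense {y : Y | j ⁻¹' {j y} = {y}} :=
  whyburn_irreducible_iff_almost_one_to_one_general j hj hjs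
end

section
/- Let j : Y → X be a continuous surjection of compact Hausdorff spaces. If j is almost one-to-one, then j is irreducible. -/
open Set

theorem mem_of_preimage_singleton_eq {Y X : Type*} {j : Y → X} {y : Y}
    (hy : j ⁻¹' {j y} = {y}) {F : Set Y} (hyF : j y ∈ j '' F) : y ∈ F := by
  obtain ⟨y', hy'F, hy'y⟩ := hyF
  have : y' ∈ j ⁻¹' {j y} := hy'y
  rw [hy, mem_singleton_iff] at this
  exact this ▸ hy'F

theorem irreducible_of_almost_one_to_one_general {Y X : Type*}
    [TopologicalSpace Y]
    (j : Y → X)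
    (h : Dense {y : Y | j ⁻¹' {j y} = {y}}) :
    ∀ F : Set Y, IsClosed F → F ⊂ Set.univ → j '' F ⊂ Set.univ := by
  intro F hF hFs
  refine ssubset_univ_iff.2 fun hjF => ssubset_univ_iff.1 hFs ?_
  have hsub : {y : Y | j ⁻¹' {j y} = {y}} ⊆ F := fun y hy =>
    mem_of_preimage_singleton_eq hy (hjF ▸ mem_univ (j y))
  rw [← hF.closure_eq, (h.mono hsub).closure_eq]

/-- For a continuous surjection of compact Hausdorff spaces, almost one-to-one implies
irreducible. -/
theorem irreducible_of_almost_one_to_one {Y X : Type*}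
    [TopologicalSpace Y] [CompactSpace Y] [T2Space Y]
    [TopologicalSpace X] [CompactSpace X] [T2Space X]
    (j : Y → X) (hj : Continuous j) (hjs : Function.Surjective j)
    (h : Dense {y : Y | j ⁻¹' {j y} = {y}}) :
    ∀ F : Set Y, IsClosed F → F ⊂ Set.univ → j '' F ⊂ Set.univ :=
  irreducible_of_almost_one_to_one_general j h
end

section
/- Let Y = ([0,1] × {0}) ∪ ({1} × [0,1]) ⊆ ℝ², X = [0,1] ⊆ ℝ, and j : Y → X the map j(x,y) = x. Then j is not almost one-to-one: the closure of the set {p ∈ Y : j⁻¹(j(p)) = {p}} equals [0,1] × {0}, which is a proper subset of Y. Nevertheless, the set {x ∈ X : j⁻¹(x) is a singleton} equals [0,1), which is dense in X. -/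
/-- The space `Y = ([0,1] × {0}) ∪ ({1} × [0,1]) ⊆ ℝ²`. -/
def Yset : Set (ℝ × ℝ) := (Set.Icc 0 1 ×ˢ ({0} : Set ℝ)) ∪ (({1} : Set ℝ) ×ˢ Set.Icc 0 1)

/-- The space `X = [0,1] ⊆ ℝ`. -/
def Xset : Set ℝ := Set.Icc 0 1

/-- The projection `j : Y → X`, `j(x,y) = x`. -/
def jmap (p : ↥Yset) : ↥Xset := ⟨p.val.1, by
  rcases p.property with h | h
  · exact h.1
  · have h1 : p.val.1 = 1 := h.1
    rw [Xset, h1]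
    exact Set.right_mem_Icc.mpr zero_le_one⟩

/-! The fiber over `1` is `{1} × [0,1]`; every other fiber is a single point of `[0,1) × {0}`.
So the points of `Y` alone in their fiber form `[0,1) × {0}`, whose closure misses `(1,1)`,
while their images `[0,1)` are dense in `X`. -/

open Set Topology

theorem Function.setOf_preimage_singleton_eq_singleton {α β : Type*} (f : α → β) :
    {a | f ⁻¹' {f a} = {a}} = f ⁻¹' {b | ∃! a, f a = b} := by
  ext a
  refine eq_singleton_iff_unique_mem.trans
    ⟨fun h ↦ ⟨a, rfl, h.2⟩, fun ⟨c, _, hc⟩ ↦ ⟨rfl, fun b hb ↦ (hc b hb).trans (hc a rfl).symm⟩⟩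

theorem closure_preimage_val_of_subset {X : Type*} [TopologicalSpace X] {s t : Set X}
    (h : t ⊆ s) : closure ((↑) ⁻¹' t : Set s) = (↑) ⁻¹' closure t := by
  rw [IsEmbedding.subtypeVal.closure_eq_preimage_closure_image, Subtype.image_preimage_coe,
    inter_eq_right.2 h]

theorem one_zero_mem_Yset : ((1 : ℝ), (0 : ℝ)) ∈ Yset :=
  Or.inl ⟨right_mem_Icc.2 zero_le_one, rfl⟩

theorem one_one_mem_Yset : ((1 : ℝ), (1 : ℝ)) ∈ Yset :=
  Or.inr ⟨rfl, right_mem_Icc.2 zero_le_one⟩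

theorem snd_eq_zero_of_mem_Yset_of_fst_lt_one {p : ℝ × ℝ} (hp : p ∈ Yset) (h : p.1 < 1) :
    p.2 = 0 := by
  rcases hp with hp | hp
  · exact hp.2
  · exact absurd hp.1 h.ne

theorem jmap_eq_iff {p : Yset} {x : Xset} : jmap p = x ↔ (p : ℝ × ℝ).1 = x :=
  Subtype.ext_iff

theorem setOf_existsUnique_jmap_eq :
    {x : Xset | ∃! p : Yset, jmap p = x} = Subtype.val ⁻¹' Ico (0 : ℝ) 1 := by
  ext ⟨x, hx0, hx1⟩
  simp only [mem_ofPred_eq, mem_preimage, mem_Ico, jmap_eq_iff]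
  rcases hx1.lt_or_eq with hlt | rfl
  · have hmem : (x, (0 : ℝ)) ∈ Yset := Or.inl ⟨⟨hx0, hx1⟩, rfl⟩
    refine iff_of_true ⟨⟨_, hmem⟩, rfl, fun q hq ↦ ?_⟩ ⟨hx0, hlt⟩
    exact Subtype.ext (Prod.ext hq (snd_eq_zero_of_mem_Yset_of_fst_lt_one q.2 (hq ▸ hlt)))
  · refine iff_of_false ?_ fun h ↦ h.2.false
    rintro ⟨p, -, hp⟩
    have h01 := (hp ⟨_, one_zero_mem_Yset⟩ rfl).trans (hp ⟨_, one_one_mem_Yset⟩ rfl).symm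
    simp [Subtype.ext_iff] at h01

theorem setOf_jmap_preimage_eq_singleton :
    {p : Yset | jmap ⁻¹' {jmap p} = {p}} = Subtype.val ⁻¹' (Ico (0 : ℝ) 1 ×ˢ {(0 : ℝ)}) := by
  rw [Function.setOf_preimage_singleton_eq_singleton, setOf_existsUnique_jmap_eq]
  ext ⟨⟨x, y⟩, hp⟩
  exact ⟨fun h ↦ ⟨h, snd_eq_zero_of_mem_Yset_of_fst_lt_one hp h.2⟩, And.left⟩

/-- `j` is not almost one-to-one: the closure of `{p ∈ Y : j⁻¹(j(p)) = {p}}` is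
`[0,1] × {0}`, a proper subset of `Y`. Nevertheless the set of points of `X` with
singleton fiber is `[0,1)`, which is dense in `X`. -/
theorem example_not_almost_one_to_one :
    closure {p : ↥Yset | jmap ⁻¹' {jmap p} = {p}} =
        Subtype.val ⁻¹' (Set.Icc 0 1 ×ˢ ({0} : Set ℝ)) ∧
    (Subtype.val ⁻¹' (Set.Icc 0 1 ×ˢ ({0} : Set ℝ)) : Set ↥Yset) ⊂ Set.univ ∧
    {x : ↥Xset | ∃! p : ↥Yset, jmap p = x} = Subtype.val ⁻¹' Set.Ico 0 1 ∧
    Dense {x : ↥Xset | ∃! p : ↥Yset, jmap p = x} := by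
  refine ⟨?_, ?_, setOf_existsUnique_jmap_eq, ?_⟩
  · have hsub : Ico (0 : ℝ) 1 ×ˢ {(0 : ℝ)} ⊆ Yset :=
      fun p hp ↦ Or.inl ⟨Ico_subset_Icc_self hp.1, hp.2⟩
    rw [setOf_jmap_preimage_eq_singleton, closure_preimage_val_of_subset hsub, closure_prod_eq,
      closure_Ico zero_ne_one, closure_singleton]
  · rw [ssubset_univ_iff, ne_univ_iff_exists_notMem]
    exact ⟨⟨_, one_one_mem_Yset⟩, fun h ↦ one_ne_zero h.2⟩
  · rw [setOf_existsUnique_jmap_eq, dense_iff_closure_eq,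
      closure_preimage_val_of_subset (s := Xset) Ico_subset_Icc_self, closure_Ico zero_ne_one]
    exact Subtype.coe_preimage_self _
end

section
/- Let Ï be the split interval, i.e., the set ((0,1] × {0}) ∪ ([0,1) × {1}) ⊆ ℝ × ℝ equipped with the order topology arising from the lexicographic order (x,y) < (x',y') iff x < x', or x = x' and y < y'. Let I = [0,1] with its usual topology, and let j : Ï → I be j(x,y) = x. Then Ï is a compact Hausdorff space, j is a continuous irreducible surjection, and the set {x ∈ I : j⁻¹(x) is a singleton} equals {0, 1}, which is not dense in I. -/
/-- The split interval `((0,1] × {0}) ∪ ([0,1) × {1})`, as a subset of `ℝ ×ₗ ℝ`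
(pairs of reals with the lexicographic order). -/
def SplitIntervalSet : Set (ℝ ×ₗ ℝ) :=
  {p | ((ofLex p).1 ∈ Set.Ioc (0 : ℝ) 1 ∧ (ofLex p).2 = 0) ∨
       ((ofLex p).1 ∈ Set.Ico (0 : ℝ) 1 ∧ (ofLex p).2 = 1)}

/-- The split interval carries the *order* topology of the (restricted) lexicographic
order, not the subspace topology from `ℝ × ℝ`. -/
instance : TopologicalSpace ↥SplitIntervalSet := Preorder.topology _

instance : OrderTopology ↥SplitIntervalSet := ⟨rfl⟩

/-- The projection `j : Ï → [0,1]`, `j(x,y) = x`. -/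
def splitProj (p : ↥SplitIntervalSet) : ↥(Set.Icc (0 : ℝ) 1) :=
  ⟨(ofLex p.val).1, by
    rcases p.property with h | h
    · exact ⟨h.1.1.le, h.1.2⟩
    · exact ⟨h.1.1, h.1.2.le⟩⟩

/-!
The projection `j` has the lower adjoint `y ↦ min j⁻¹(y)` and fibres with at most two points, so
every set `s ⊆ Ï` has a supremum: the largest point of `s` over `sup j(s)` if there is one, the least
point of the fibre over `sup j(s)` otherwise. Thus `Ï` is a complete linear order, hence compact in
its order topology, and `j`, monotone onto the densely ordered `I`, is continuous. If `F` is closed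
and `j(F) = I`, density of `I` makes every `(x,0)` the supremum of the points of `F` below it and
every `(x,1)` the infimum of those above it, so `F = Ï`. Over each `0 < x < 1` lie both `(x,0)` and
`(x,1)`.
-/

open Set

theorem compactSpace_of_forall_exists_isLUB {X : Type*} [LinearOrder X] [TopologicalSpace X]
    [OrderTopology X] (h : ∀ s : Set X, ∃ b, IsLUB s b) : CompactSpace X := by
  let _ : SupSet X := ⟨fun s => (h s).choose⟩
  let _ : CompleteLattice X :=
    { LinearOrder.toLattice, completeLatticeOfSup X fun s => (h s).choose_spec with }
  let inst : CompleteLinearOrder X :=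
    { ‹CompleteLattice X›, ‹LinearOrder X›, LinearOrder.toBiheytingAlgebra X with }
  exact @compactSpace_of_completeLinearOrder X inst _ ‹_›

theorem GaloisConnection.exists_isLUB_of_finite_fibers {X Y : Type*} [LinearOrder X]
    [CompleteLinearOrder Y] {l : Y → X} {u : X → Y} (gc : GaloisConnection l u)
    (hfin : ∀ y, (u ⁻¹' {y}).Finite) (s : Set X) : ∃ b, IsLUB s b := by
  set y := sSup (u '' s)
  have hle : ∀ q ∈ s, u q ≤ y := fun q hq => le_sSup (mem_image_of_mem u hq)
  by_cases htop : (s ∩ u ⁻¹' {y}).Nonempty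
  · obtain ⟨m, ⟨hms, hmy⟩, hmax⟩ :=
      exists_max_image _ id ((hfin y).subset inter_subset_right) htop
    refine ⟨m, IsGreatest.isLUB ⟨hms, fun q hq => ?_⟩⟩
    rcases (hle q hq).lt_or_eq with hlt | heq
    · exact (gc.lt_iff_lt.2 hlt).le.trans ((gc y m).2 hmy.ge)
    · exact hmax q ⟨hq, heq⟩
  · refine ⟨l y, fun q hq => ?_, fun b hb => (gc y b).2 (sSup_le ?_)⟩
    · exact (gc.lt_iff_lt.2 ((hle q hq).lt_of_ne fun h => htop ⟨q, hq, h⟩)).le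
    · rintro _ ⟨q, hq, rfl⟩
      exact gc.monotone_u (hb hq)

theorem Monotone.mem_of_isClosed_of_image_eq_univ {X Y : Type*} [LinearOrder X]
    [TopologicalSpace X] [OrderTopology X] [LinearOrder Y] [DenselyOrdered Y] {f : X → Y}
    (hf : Monotone f) {F : Set X} (hF : IsClosed F) (hFf : f '' F = univ) {p : X}
    (hp : ∀ b < p, f b < f p) (hbot : ∃ y, y < f p) : p ∈ F := by
  have hsurj : ∀ y, y ∈ f '' F := by simp [hFf]
  have hlub : IsLUB (F ∩ Iio p) p := by
    refine ⟨fun q hq => hq.2.le, fun b hb => le_of_not_gt fun hbp => ?_⟩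
    obtain ⟨y, hby, hyp⟩ := exists_between (hp b hbp)
    obtain ⟨q, hqF, rfl⟩ := hsurj y
    exact (hf (hb ⟨hqF, hf.reflect_lt hyp⟩)).not_gt hby
  obtain ⟨y, hy⟩ := hbot
  obtain ⟨q, hqF, rfl⟩ := hsurj y
  exact hF.closure_subset_iff.2 inter_subset_left (hlub.mem_closure ⟨q, hqF, hf.reflect_lt hy⟩)

theorem Monotone.mem_of_isClosed_of_image_eq_univ' {X Y : Type*} [LinearOrder X]
    [TopologicalSpace X] [OrderTopology X] [LinearOrder Y] [DenselyOrdered Y] {f : X → Y}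
    (hf : Monotone f) {F : Set X} (hF : IsClosed F) (hFf : f '' F = univ) {p : X}
    (hp : ∀ b > p, f p < f b) (htop : ∃ y, f p < y) : p ∈ F :=
  hf.dual.mem_of_isClosed_of_image_eq_univ (X := Xᵒᵈ) hF hFf hp htop

local notation "Ï" => Set.Elem SplitIntervalSet

namespace SplitInterval

def snd (p : Ï) : ℝ := (ofLex p.1).2

theorem pos_and_snd_eq_zero_or_lt_one_and_snd_eq_one (p : Ï) :
    (0 < (splitProj p : ℝ) ∧ snd p = 0) ∨ ((splitProj p : ℝ) < 1 ∧ snd p = 1) :=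
  p.2.imp (fun h => ⟨h.1.1, h.2⟩) fun h => ⟨h.1.2, h.2⟩

theorem snd_nonneg (p : Ï) : 0 ≤ snd p := by
  rcases pos_and_snd_eq_zero_or_lt_one_and_snd_eq_one p with ⟨-, h⟩ | ⟨-, h⟩ <;> simp [h]

theorem snd_le_one (p : Ï) : snd p ≤ 1 := by
  rcases pos_and_snd_eq_zero_or_lt_one_and_snd_eq_one p with ⟨-, h⟩ | ⟨-, h⟩ <;> simp [h]

theorem snd_eq_one_of_splitProj_eq_zero {p : Ï} (h : (splitProj p : ℝ) = 0) : snd p = 1 :=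
  ((pos_and_snd_eq_zero_or_lt_one_and_snd_eq_one p).resolve_left fun h' => h'.1.ne' h).2

theorem snd_eq_zero_of_splitProj_eq_one {p : Ï} (h : (splitProj p : ℝ) = 1) : snd p = 0 :=
  ((pos_and_snd_eq_zero_or_lt_one_and_snd_eq_one p).resolve_right fun h' => h'.1.ne h).2

theorem le_iff {p q : Ï} :
    p ≤ q ↔ (splitProj p : ℝ) < splitProj q ∨ (splitProj p : ℝ) = splitProj q ∧ snd p ≤ snd q :=
  Prod.Lex.le_iff

theorem lt_iff {p q : Ï} :
    p < q ↔ (splitProj p : ℝ) < splitProj q ∨ (splitProj p : ℝ) = splitProj q ∧ snd p < snd q :=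
  Prod.Lex.lt_iff

theorem ext {p q : Ï} (h₁ : splitProj p = splitProj q) (h₂ : snd p = snd q) : p = q :=
  Subtype.ext <| ofLex.injective <| Prod.ext (congrArg Subtype.val h₁) h₂

noncomputable def fiberMin (y : Icc (0 : ℝ) 1) : Ï :=
  if h : 0 < (y : ℝ) then ⟨toLex (y, 0), Or.inl ⟨⟨h, y.2.2⟩, rfl⟩⟩
  else ⟨toLex (0, 1), Or.inr ⟨⟨le_rfl, zero_lt_one⟩, rfl⟩⟩

theorem splitProj_fiberMin (y : Icc (0 : ℝ) 1) : splitProj (fiberMin y) = y := by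
  unfold fiberMin
  split_ifs with h
  · rfl
  · exact Subtype.ext (le_antisymm (not_lt.1 h) y.2.1).symm

theorem gc_fiberMin_splitProj : GaloisConnection fiberMin splitProj := by
  intro y p
  unfold fiberMin
  split_ifs with hy
  · rw [le_iff, Subtype.coe_le_coe.symm.trans le_iff_lt_or_eq]
    exact or_congr_right (and_iff_left (snd_nonneg p))
  · have hy0 : (y : ℝ) = 0 := le_antisymm (not_lt.1 hy) y.2.1
    refine iff_of_true ?_ (by rw [← Subtype.coe_le_coe, hy0]; exact (splitProj p).2.1)
    rcases (splitProj p).2.1.lt_or_eq with hp | hp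
    · exact le_iff.2 (Or.inl hp)
    · exact le_iff.2 (Or.inr ⟨hp, (snd_eq_one_of_splitProj_eq_zero hp.symm).ge⟩)

theorem monotone_splitProj : Monotone splitProj :=
  gc_fiberMin_splitProj.monotone_u

theorem splitProj_surjective : Function.Surjective splitProj :=
  Function.LeftInverse.surjective splitProj_fiberMin

theorem finite_splitProj_preimage_singleton (y : Icc (0 : ℝ) 1) :
    (splitProj ⁻¹' {y}).Finite :=
  (toFinite {0, 1}).of_injOn (f := snd)
    (fun p _ => by
      rcases pos_and_snd_eq_zero_or_lt_one_and_snd_eq_one p with ⟨-, h⟩ | ⟨-, h⟩ <;> simp [h])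
    fun p hp q hq h => ext (hp.trans hq.symm) h

instance : CompactSpace Ï :=
  compactSpace_of_forall_exists_isLUB
    (gc_fiberMin_splitProj.exists_isLUB_of_finite_fibers finite_splitProj_preimage_singleton)

theorem eq_univ_of_isClosed_of_splitProj_image_eq_univ {F : Set Ï} (hF : IsClosed F)
    (h : splitProj '' F = univ) : F = univ := by
  refine eq_univ_of_forall fun p => ?_
  rcases pos_and_snd_eq_zero_or_lt_one_and_snd_eq_one p with ⟨hp, hp0⟩ | ⟨hp, hp1⟩
  · refine monotone_splitProj.mem_of_isClosed_of_image_eq_univ hF h (fun b hb => ?_)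
      ⟨⟨0, left_mem_Icc.2 zero_le_one⟩, hp⟩
    exact (lt_iff.1 hb).resolve_right fun h => (snd_nonneg b).not_gt (hp0 ▸ h.2)
  · refine monotone_splitProj.mem_of_isClosed_of_image_eq_univ' hF h (fun b hb => ?_)
      ⟨⟨1, right_mem_Icc.2 zero_le_one⟩, hp⟩
    exact (lt_iff.1 hb).resolve_right fun h => (snd_le_one b).not_gt (hp1 ▸ h.2)

theorem setOf_existsUnique_splitProj_eq :
    {x : Icc (0 : ℝ) 1 | ∃! p : Ï, splitProj p = x} =
      {⟨0, left_mem_Icc.2 zero_le_one⟩, ⟨1, right_mem_Icc.2 zero_le_one⟩} := by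
  ext x
  simp only [mem_ofPred_eq, mem_insert_iff, mem_singleton_iff]
  constructor
  · rintro ⟨p, -, huniq⟩
    by_contra! hx
    have h₀ : 0 < (x : ℝ) := x.2.1.lt_of_ne' fun h => hx.1 (Subtype.ext h)
    have h₁ : (x : ℝ) < 1 := x.2.2.lt_of_ne fun h => hx.2 (Subtype.ext h)
    have := (huniq ⟨toLex (x, 0), Or.inl ⟨⟨h₀, x.2.2⟩, rfl⟩⟩ rfl).trans
      (huniq ⟨toLex (x, 1), Or.inr ⟨⟨x.2.1, h₁⟩, rfl⟩⟩ rfl).symm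
    exact zero_ne_one (congrArg snd this)
  · intro hx
    refine existsUnique_of_exists_of_unique (splitProj_surjective x) fun p q hp hq => ?_
    refine ext (hp.trans hq.symm) ?_
    rcases hx with rfl | rfl
    · rw [snd_eq_one_of_splitProj_eq_zero (congrArg Subtype.val hp),
        snd_eq_one_of_splitProj_eq_zero (congrArg Subtype.val hq)]
    · rw [snd_eq_zero_of_splitProj_eq_one (congrArg Subtype.val hp),
        snd_eq_zero_of_splitProj_eq_one (congrArg Subtype.val hq)]

end SplitInterval

/-- The split interval is compact Hausdorff, and the projection `j : Ï → [0,1]` is a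
continuous irreducible surjection, yet the set of points of `[0,1]` with singleton fiber
is `{0, 1}`, which is not dense. -/
theorem split_interval_irreducible_not_almost_one_to_one :
    CompactSpace ↥SplitIntervalSet ∧ T2Space ↥SplitIntervalSet ∧
    Continuous splitProj ∧ Function.Surjective splitProj ∧
    (∀ F : Set ↥SplitIntervalSet, IsClosed F → F ⊂ Set.univ →
      splitProj '' F ⊂ Set.univ) ∧
    {x : ↥(Set.Icc (0 : ℝ) 1) | ∃! p : ↥SplitIntervalSet, splitProj p = x} =
      {⟨0, Set.left_mem_Icc.mpr zero_le_one⟩, ⟨1, Set.right_mem_Icc.mpr zero_le_one⟩} ∧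
    ¬ Dense {x : ↥(Set.Icc (0 : ℝ) 1) | ∃! p : ↥SplitIntervalSet, splitProj p = x} := by
  refine ⟨inferInstance, inferInstance,
    SplitInterval.monotone_splitProj.continuous_of_surjective SplitInterval.splitProj_surjective,
    SplitInterval.splitProj_surjective, fun F hF hFu => ?_,
    SplitInterval.setOf_existsUnique_splitProj_eq, ?_⟩
  · rw [ssubset_univ_iff] at hFu ⊢
    exact mt (SplitInterval.eq_univ_of_isClosed_of_splitProj_image_eq_univ hF) hFu
  · rw [SplitInterval.setOf_existsUnique_splitProj_eq]
    intro hd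
    have half := hd.closure_eq ▸ mem_univ (⟨1 / 2, by norm_num, by norm_num⟩ : Icc (0 : ℝ) 1)
    rw [(toFinite _).isClosed.closure_eq] at half
    norm_num [Subtype.ext_iff] at half
end
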